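/- The two monotone Bellman iterations meet: the pointwise limit of the non-decreasing sequence F^n(constant m₀) as n → ∞ equals the pointwise limit of the non-increasing sequence F^n(constant M₀) as n → ∞ (both limits exist since the sequences are monotone and bounded). -/
import Mathlib


open Filter Topology

/-- The Bellman min–max operator: `F(m)(s) = min_x max_y (λ·m(T(x,y;s)) + (1−λ)·U(x,y;s))`,
where `(1−λ)·U` is the rescaled utility `U_λ`. -/
noncomputable def bellmanMinMax {S : Type*} (X Y : S → Type*)
    [∀ s, Fintype (X s)] [∀ s, Nonempty (X s)]
    [∀ s, Fintype (Y s)] [∀ s, Nonempty (Y s)]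
    (T : ∀ s, X s → Y s → S) (U : ∀ s, X s → Y s → ℝ) (lam : ℝ)
    (m : S → ℝ) (s : S) : ℝ :=
  Finset.univ.inf' Finset.univ_nonempty fun x : X s =>
    Finset.univ.sup' Finset.univ_nonempty fun y : Y s =>
      lam * m (T s x y) + (1 - lam) * U s x y

/-- The Bellman max–min operator: `G(M)(s) = max_x min_y (λ·M(T(x,y;s)) + (1−λ)·U(x,y;s))`. -/
noncomputable def bellmanMaxMin {S : Type*} (X Y : S → Type*)
    [∀ s, Fintype (X s)] [∀ s, Nonempty (X s)]
    [∀ s, Fintype (Y s)] [∀ s, Nonempty (Y s)]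
    (T : ∀ s, X s → Y s → S) (U : ∀ s, X s → Y s → ℝ) (lam : ℝ)
    (M : S → ℝ) (s : S) : ℝ :=
  Finset.univ.sup' Finset.univ_nonempty fun x : X s =>
    Finset.univ.inf' Finset.univ_nonempty fun y : Y s =>
      lam * M (T s x y) + (1 - lam) * U s x y

/-- `m₀`, the minimum of the utility over all state–action triples. -/
noncomputable def utilMin {S : Type*} [Fintype S] [Nonempty S] (X Y : S → Type*)
    [∀ s, Fintype (X s)] [∀ s, Nonempty (X s)]
    [∀ s, Fintype (Y s)] [∀ s, Nonempty (Y s)]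
    (U : ∀ s, X s → Y s → ℝ) : ℝ :=
  haveI : Nonempty ((s : S) × X s × Y s) :=
    ⟨⟨Classical.arbitrary S, Classical.arbitrary _, Classical.arbitrary _⟩⟩
  Finset.univ.inf' Finset.univ_nonempty fun p : Σ s : S, X s × Y s => U p.1 p.2.1 p.2.2

/-- `M₀`, the maximum of the utility over all state–action triples. -/
noncomputable def utilMax {S : Type*} [Fintype S] [Nonempty S] (X Y : S → Type*)
    [∀ s, Fintype (X s)] [∀ s, Nonempty (X s)]
    [∀ s, Fintype (Y s)] [∀ s, Nonempty (Y s)]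
    (U : ∀ s, X s → Y s → ℝ) : ℝ :=
  haveI : Nonempty ((s : S) × X s × Y s) :=
    ⟨⟨Classical.arbitrary S, Classical.arbitrary _, Classical.arbitrary _⟩⟩
  Finset.univ.sup' Finset.univ_nonempty fun p : Σ s : S, X s × Y s => U p.1 p.2.1 p.2.2


private lemma abs_inf'_sub_inf'_le {α : Type*} [Fintype α] [Nonempty α]
    (f g : α → ℝ) (C : ℝ) (h : ∀ a, |f a - g a| ≤ C) :
    |Finset.univ.inf' Finset.univ_nonempty f - Finset.univ.inf' Finset.univ_nonempty g| ≤ C := by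
  rw [abs_sub_le_iff]
  constructor
  · obtain ⟨b, -, hb⟩ := Finset.exists_mem_eq_inf' (Finset.univ_nonempty (α := α)) g
    rw [hb]
    have : Finset.univ.inf' Finset.univ_nonempty f ≤ f b := Finset.inf'_le f (Finset.mem_univ b)
    have h2 := (abs_sub_le_iff.mp (h b)).1
    linarith
  · obtain ⟨b, -, hb⟩ := Finset.exists_mem_eq_inf' (Finset.univ_nonempty (α := α)) f
    rw [hb]
    have : Finset.univ.inf' Finset.univ_nonempty g ≤ g b := Finset.inf'_le g (Finset.mem_univ b)
    have h2 := (abs_sub_le_iff.mp (h b)).2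
    linarith

private lemma abs_sup'_sub_sup'_le {α : Type*} [Fintype α] [Nonempty α]
    (f g : α → ℝ) (C : ℝ) (h : ∀ a, |f a - g a| ≤ C) :
    |Finset.univ.sup' Finset.univ_nonempty f - Finset.univ.sup' Finset.univ_nonempty g| ≤ C := by
  rw [abs_sub_le_iff]
  constructor
  · obtain ⟨b, -, hb⟩ := Finset.exists_mem_eq_sup' (Finset.univ_nonempty (α := α)) f
    rw [hb]
    have := Finset.le_sup' g (Finset.mem_univ b)
    have h2 := (abs_sub_le_iff.mp (h b)).1
    linarith
  · obtain ⟨b, -, hb⟩ := Finset.exists_mem_eq_sup' (Finset.univ_nonempty (α := α)) g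
    rw [hb]
    have := Finset.le_sup' f (Finset.mem_univ b)
    have h2 := (abs_sub_le_iff.mp (h b)).2
    linarith

private lemma bellman_contracting
    {S : Type*} [Fintype S] [Nonempty S]
    (X Y : S → Type*)
    [∀ s, Fintype (X s)] [∀ s, Nonempty (X s)]
    [∀ s, Fintype (Y s)] [∀ s, Nonempty (Y s)]
    (T : ∀ s, X s → Y s → S) (U : ∀ s, X s → Y s → ℝ)
    (lam : ℝ) (hlam : lam ∈ Set.Ioo (0 : ℝ) 1) :
    ContractingWith ⟨lam, hlam.1.le⟩ (bellmanMinMax X Y T U lam) := by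
  obtain ⟨h0, h1⟩ := hlam
  refine ⟨by exact_mod_cast h1, LipschitzWith.of_dist_le_mul fun m m' => ?_⟩
  rw [dist_pi_le_iff (by positivity)]
  intro s
  rw [Real.dist_eq]
  apply abs_inf'_sub_inf'_le
  intro x
  apply abs_sup'_sub_sup'_le
  intro y
  have hd : |m (T s x y) - m' (T s x y)| ≤ dist m m' := by
    rw [← Real.dist_eq]; exact dist_le_pi_dist m m' (T s x y)
  have : lam * m (T s x y) + (1 - lam) * U s x y -
      (lam * m' (T s x y) + (1 - lam) * U s x y) = lam * (m (T s x y) - m' (T s x y)) := by ring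
  rw [this, abs_mul, abs_of_pos h0]
  exact mul_le_mul_of_nonneg_left hd h0.le

/-- The two monotone Bellman iterations meet: the pointwise limits of
`F^n(const m₀)` (non-decreasing) and `F^n(const M₀)` (non-increasing) coincide. -/
theorem bellman_iterations_meet
    {S : Type*} [Fintype S] [Nonempty S]
    (X Y : S → Type*)
    [∀ s, Fintype (X s)] [∀ s, Nonempty (X s)]
    [∀ s, Fintype (Y s)] [∀ s, Nonempty (Y s)]
    (T : ∀ s, X s → Y s → S) (U : ∀ s, X s → Y s → ℝ)
    (lam : ℝ) (hlam : lam ∈ Set.Ioo (0 : ℝ) 1) :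
    ∃ m : S → ℝ, ∀ s,
      Filter.Tendsto
        (fun n : ℕ => (bellmanMinMax X Y T U lam)^[n] (fun _ => utilMin X Y U) s)
        Filter.atTop (nhds (m s)) ∧
      Filter.Tendsto
        (fun n : ℕ => (bellmanMinMax X Y T U lam)^[n] (fun _ => utilMax X Y U) s)
        Filter.atTop (nhds (m s)) := by
  have hc := bellman_contracting X Y T U lam hlam
  refine ⟨hc.fixedPoint (bellmanMinMax X Y T U lam), fun s => ?_⟩
  constructor <;>
    exact ((continuous_apply s).tendsto _).comp (hc.tendsto_iterate_fixedPoint _)
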